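/- Let K₊, K₋, ν be positive real numbers and set G(z) = ₁F₁({K₊},{K₊+K₋}, ν(z−1)). For each natural number n set pₙ = (νⁿ (K₊)_n)/(n! (K₊+K₋)_n) · ₁F₁({K₊+n},{K₊+K₋+n}, −ν). Then for every real z the series Σ_{n=0}^∞ pₙ zⁿ converges and equals G(z), and Σ_{n=0}^∞ pₙ = 1. -/

import Mathlib

/-- The Pochhammer symbol (a)ₖ = a(a+1)⋯(a+k−1) for a real parameter. -/
noncomputable def poch (a : ℝ) (k : ℕ) : ℝ := (ascPochhammer ℝ k).eval a

/-- The confluent hypergeometric function ₁F₁({a},{b},x). -/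
noncomputable def F11 (a b x : ℝ) : ℝ :=
  ∑' k : ℕ, poch a k / poch b k * x ^ k / (Nat.factorial k)

lemma poch_zero (a : ℝ) : poch a 0 = 1 := by simp [poch]

lemma poch_succ (a : ℝ) (n : ℕ) : poch a (n + 1) = poch a n * (a + n) := by
  simp [poch, ascPochhammer_succ_eval]

lemma poch_pos {a : ℝ} (ha : 0 < a) (k : ℕ) : 0 < poch a k :=
  ascPochhammer_pos k a ha

lemma poch_le {a b : ℝ} (ha : 0 < a) (hab : a ≤ b) (k : ℕ) : poch a k ≤ poch b k := by
  induction k with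
  | zero => simp [poch_zero]
  | succ n ih =>
    rw [poch_succ, poch_succ]
    have hn : (0 : ℝ) ≤ n := Nat.cast_nonneg n
    have h1 := poch_pos ha n
    have h2 := poch_pos (lt_of_lt_of_le ha hab) n
    nlinarith

lemma poch_add (a : ℝ) (n m : ℕ) : poch a (n + m) = poch a n * poch (a + n) m := by
  have h := congrArg (Polynomial.eval a) (ascPochhammer_mul (S := ℝ) n m)
  simpa [poch, Polynomial.eval_mul, Polynomial.eval_comp] using h.symm

lemma F11_summable {a b : ℝ} (ha : 0 < a) (hab : a ≤ b) (x : ℝ) :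
    Summable (fun k : ℕ => poch a k / poch b k * x ^ k / (Nat.factorial k)) := by
  have hb : 0 < b := lt_of_lt_of_le ha hab
  apply Summable.of_abs
  refine Summable.of_nonneg_of_le (fun k => abs_nonneg _) (fun k => ?_)
    (Real.summable_pow_div_factorial |x|)
  have hak := poch_pos ha k
  have hbk := poch_pos hb k
  have hratio : poch a k / poch b k ≤ 1 := by
    rw [div_le_one hbk]; exact poch_le ha hab k
  have hratio0 : 0 ≤ poch a k / poch b k := le_of_lt (div_pos hak hbk)
  have : |poch a k / poch b k * x ^ k / (Nat.factorial k)|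
      = poch a k / poch b k * |x| ^ k / (Nat.factorial k) := by
    rw [abs_div, abs_mul, abs_of_nonneg hratio0, abs_pow,
      abs_of_nonneg (by positivity : (0:ℝ) ≤ (Nat.factorial k : ℝ))]
  rw [this]
  have hxk : (0:ℝ) ≤ |x| ^ k := by positivity
  have hfk : (0:ℝ) < (Nat.factorial k : ℝ) := by positivity
  calc poch a k / poch b k * |x| ^ k / (Nat.factorial k)
      ≤ 1 * |x| ^ k / (Nat.factorial k) := by
        apply div_le_div_of_nonneg_right _ hfk.le
        exact mul_le_mul_of_nonneg_right hratio hxk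
    _ = |x| ^ k / (Nat.factorial k) := by ring

lemma F11_hasSum {a b : ℝ} (ha : 0 < a) (hab : a ≤ b) (x : ℝ) :
    HasSum (fun k : ℕ => poch a k / poch b k * x ^ k / (Nat.factorial k)) (F11 a b x) :=
  (F11_summable ha hab x).hasSum

lemma F11_zero (a b : ℝ) : F11 a b 0 = 1 := by
  rw [F11, tsum_eq_single 0]
  · simp [poch_zero]
  · intro k hk
    simp [zero_pow hk]

lemma antidiag_sum (x y : ℝ) (k : ℕ) :
    ∑ ij ∈ Finset.HasAntidiagonal.antidiagonal k,
      x ^ ij.1 * y ^ ij.2 / ((Nat.factorial ij.1 : ℝ) * (Nat.factorial ij.2 : ℝ))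
      = (x + y) ^ k / (Nat.factorial k) := by
  rw [Finset.Nat.sum_antidiagonal_eq_sum_range_succ_mk, add_pow, Finset.sum_div]
  refine Finset.sum_congr rfl fun n hn => ?_
  have hnk : n ≤ k := Nat.lt_succ_iff.mp (Finset.mem_range.mp hn)
  have h := Nat.choose_mul_factorial_mul_factorial hnk
  have h' : ((k.choose n : ℝ)) * (Nat.factorial n) * (Nat.factorial (k - n))
      = (Nat.factorial k) := by exact_mod_cast congrArg (Nat.cast (R := ℝ)) h
  have h1 : (Nat.factorial n : ℝ) ≠ 0 := by positivity
  have h2 : (Nat.factorial (k - n) : ℝ) ≠ 0 := by positivity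
  have h3 : (Nat.factorial k : ℝ) ≠ 0 := by positivity
  rw [div_eq_div_iff (by positivity) (by positivity), ← h']
  ring

/-- In the two-state (Peccoud–Ycart) gene model, with
G(z) = ₁F₁({K₊},{K₊+K₋}, ν(z−1)) and
pₙ = (νⁿ (K₊)ₙ)/(n! (K₊+K₋)ₙ) · ₁F₁({K₊+n},{K₊+K₋+n}, −ν),
the series Σₙ pₙ zⁿ converges to G(z) for every real z, and Σₙ pₙ = 1. -/
theorem two_state_taylor_and_normalization
    (Kp Km ν : ℝ) (hKp : 0 < Kp) (hKm : 0 < Km) (hν : 0 < ν)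
    (G : ℝ → ℝ) (hG : ∀ z : ℝ, G z = F11 Kp (Kp + Km) (ν * (z - 1)))
    (p : ℕ → ℝ)
    (hp : ∀ n : ℕ, p n = (ν ^ n * poch Kp n) / ((Nat.factorial n) * poch (Kp + Km) n)
      * F11 (Kp + n) (Kp + Km + n) (-ν)) :
    (∀ z : ℝ, HasSum (fun n : ℕ => p n * z ^ n) (G z)) ∧ HasSum p 1 := by
  have hB : 0 < Kp + Km := by linarith
  have hle : Kp ≤ Kp + Km := by linarith
  have key : ∀ z : ℝ, HasSum (fun n : ℕ => p n * z ^ n) (G z) := by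
    intro z
    set f : ℕ × ℕ → ℝ := fun q =>
      poch Kp (q.1 + q.2) / poch (Kp + Km) (q.1 + q.2) *
        ((ν * z) ^ q.1 * (-ν) ^ q.2 / ((Nat.factorial q.1 : ℝ) * (Nat.factorial q.2 : ℝ)))
      with hf
    -- summability of the double series
    have hsum : Summable f := by
      apply Summable.of_abs
      refine Summable.of_nonneg_of_le (fun q => abs_nonneg _) (fun q => ?_)
        ((Real.summable_pow_div_factorial (ν * |z|)).mul_of_nonneg
          (Real.summable_pow_div_factorial ν)
          (fun n => by positivity) (fun m => by positivity))
      obtain ⟨n, m⟩ := q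
      have hak := poch_pos hKp (n + m)
      have hbk := poch_pos hB (n + m)
      have hratio : poch Kp (n + m) / poch (Kp + Km) (n + m) ≤ 1 := by
        rw [div_le_one hbk]; exact poch_le hKp hle (n + m)
      have hratio0 : 0 ≤ poch Kp (n + m) / poch (Kp + Km) (n + m) :=
        le_of_lt (div_pos hak hbk)
      have habs : |f (n, m)| = poch Kp (n + m) / poch (Kp + Km) (n + m) *
          ((ν * |z|) ^ n * ν ^ m / ((Nat.factorial n : ℝ) * (Nat.factorial m : ℝ))) := by
        simp only [hf]
        rw [abs_mul, abs_of_nonneg hratio0, abs_div, abs_mul, abs_pow, abs_pow, abs_mul,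
          abs_neg, abs_of_pos hν, abs_of_nonneg
            (by positivity : (0:ℝ) ≤ (Nat.factorial n : ℝ) * (Nat.factorial m : ℝ))]
      rw [habs]
      have hrhs : (0:ℝ) ≤ (ν * |z|) ^ n * ν ^ m / ((Nat.factorial n : ℝ) * (Nat.factorial m : ℝ)) := by
        positivity
      calc poch Kp (n + m) / poch (Kp + Km) (n + m) *
            ((ν * |z|) ^ n * ν ^ m / ((Nat.factorial n : ℝ) * (Nat.factorial m : ℝ)))
          ≤ 1 * ((ν * |z|) ^ n * ν ^ m / ((Nat.factorial n : ℝ) * (Nat.factorial m : ℝ))) :=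
            mul_le_mul_of_nonneg_right hratio hrhs
        _ = (ν * |z|) ^ n / (Nat.factorial n) * (ν ^ m / (Nat.factorial m)) := by ring
    -- fibers over the first coordinate
    have hfib : ∀ n : ℕ, HasSum (fun m => f (n, m)) (p n * z ^ n) := by
      intro n
      have hn0 : (0:ℝ) < Kp + n := by positivity
      have hnle : Kp + (n : ℝ) ≤ Kp + Km + n := by linarith
      have hF := F11_hasSum hn0 hnle (-ν)
      set c : ℝ := (ν ^ n * poch Kp n) / ((Nat.factorial n) * poch (Kp + Km) n) * z ^ n with hc
      have heq : (fun m => f (n, m)) =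
          (fun m => c * (poch (Kp + n) m / poch (Kp + Km + n) m * (-ν) ^ m / (Nat.factorial m))) := by
        funext m
        simp only [hf, hc]
        rw [poch_add Kp n m, poch_add (Kp + Km) n m]
        have h1 : poch (Kp + Km) n ≠ 0 := ne_of_gt (poch_pos hB n)
        have h2 : poch (Kp + Km + n) m ≠ 0 := ne_of_gt (poch_pos (by positivity) m)
        have h3 : poch (Kp + n) m ≠ 0 := ne_of_gt (poch_pos hn0 m)
        have h4 : (Nat.factorial n : ℝ) ≠ 0 := by positivity
        have h5 : (Nat.factorial m : ℝ) ≠ 0 := by positivity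
        field_simp
        ring
      rw [heq, hp n]
      have := hF.mul_left c
      convert this using 1
      · rfl
      rw [hc]; ring
    have hS : HasSum f (∑' q, f q) := hsum.hasSum
    have h1 : HasSum (fun n => p n * z ^ n) (∑' q, f q) := hS.prod_fiberwise hfib
    -- now identify the sum with G z using antidiagonal decomposition
    have hGsum : HasSum (fun k : ℕ => poch Kp k / poch (Kp + Km) k * (ν * (z - 1)) ^ k /
        (Nat.factorial k)) (G z) := by
      rw [hG]; exact F11_hasSum hKp hle (ν * (z - 1))
    have he : HasSum (f ∘ Finset.HasAntidiagonal.sigmaAntidiagonalEquivProd) (∑' q, f q) :=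
      (Equiv.hasSum_iff Finset.HasAntidiagonal.sigmaAntidiagonalEquivProd).mpr hS
    have hfib2 : ∀ k : ℕ, HasSum
        (fun c : (Finset.HasAntidiagonal.antidiagonal k : Finset (ℕ × ℕ)) =>
          (f ∘ Finset.HasAntidiagonal.sigmaAntidiagonalEquivProd) ⟨k, c⟩)
        (poch Kp k / poch (Kp + Km) k * (ν * (z - 1)) ^ k / (Nat.factorial k)) := by
      intro k
      have hft := hasSum_fintype
        (fun c : (Finset.HasAntidiagonal.antidiagonal k : Finset (ℕ × ℕ)) =>
          (f ∘ Finset.HasAntidiagonal.sigmaAntidiagonalEquivProd) ⟨k, c⟩)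
      convert hft using 1
      have hval : ∑ c : (Finset.HasAntidiagonal.antidiagonal k : Finset (ℕ × ℕ)),
          (f ∘ Finset.HasAntidiagonal.sigmaAntidiagonalEquivProd) ⟨k, c⟩
          = ∑ ij ∈ Finset.HasAntidiagonal.antidiagonal k, f ij := by
        rw [← Finset.sum_coe_sort (Finset.HasAntidiagonal.antidiagonal k) f]
        rfl
      rw [hval]
      have hterm : ∀ ij ∈ Finset.HasAntidiagonal.antidiagonal k, f ij =
          poch Kp k / poch (Kp + Km) k *
            ((ν * z) ^ ij.1 * (-ν) ^ ij.2 / ((Nat.factorial ij.1 : ℝ) * (Nat.factorial ij.2 : ℝ))) := by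
        intro ij hij
        rw [Finset.HasAntidiagonal.mem_antidiagonal] at hij
        simp only [hf, hij]
      rw [Finset.sum_congr rfl hterm, ← Finset.mul_sum, antidiag_sum]
      have hxy : ν * z + -ν = ν * (z - 1) := by ring
      rw [hxy]
      ring
    have hS2 : HasSum (fun k : ℕ => poch Kp k / poch (Kp + Km) k * (ν * (z - 1)) ^ k /
        (Nat.factorial k)) (∑' q, f q) := he.sigma hfib2
    have : (∑' q, f q) = G z := hS2.unique hGsum
    rwa [this] at h1
  refine ⟨key, ?_⟩
  have h1 := key 1
  simp only [one_pow, mul_one] at h1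
  have : G 1 = 1 := by
    rw [hG]
    norm_num [F11_zero]
  rwa [this] at h1
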